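/- arXiv:1106.0026 — 4 statements merged into one kernel-verified Lean document; each statement's English description precedes it below -/
import Mathlib

section
/- Let H be a Hilbert space and T a self-adjoint bounded linear operator on H. For every f ∈ H with Tⁿf ≠ 0 for all n, the limits lim_{n→∞} ⟨Tⁿ⁺¹f, Tⁿ⁺¹f⟩/⟨Tⁿf, Tⁿf⟩ and lim_{n→∞} ⟨Tⁿf, Tⁿf⟩^{1/n} both exist, are finite, and are equal. -/
/-!
For self-adjoint `T`, Cauchy–Schwarz gives `‖Tⁿ⁺¹f‖² = ⟪Tⁿf, Tⁿ⁺²f⟫ ≤ ‖Tⁿf‖ ‖Tⁿ⁺²f‖`, so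
`aₙ = ‖Tⁿf‖²` is log-convex and the ratios `aₙ₊₁ / aₙ` increase. They are bounded by `‖T‖²`,
hence converge to some `L ≥ a₁ / a₀ > 0`. Since `log aₙ - log a₀` is the sum of the first `n`
log-ratios, Cesàro convergence gives `(log aₙ) / n → log L`, that is `aₙ ^ (1 / n) → L`.
-/

open RealInnerProductSpace Filter Topology

theorem LinearMap.IsSymmetric.norm_apply_sq_le {𝕜 E : Type*} [RCLike 𝕜] [NormedAddCommGroup E]
    [InnerProductSpace 𝕜 E] {T : E →ₗ[𝕜] E} (hT : T.IsSymmetric) (x : E) :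
    ‖T x‖ ^ 2 ≤ ‖x‖ * ‖T (T x)‖ :=
  calc ‖T x‖ ^ 2 = RCLike.re (inner 𝕜 (T x) (T x)) := (inner_self_eq_norm_sq _).symm
    _ = RCLike.re (inner 𝕜 x (T (T x))) := by rw [hT]
    _ ≤ ‖inner 𝕜 x (T (T x))‖ := RCLike.re_le_norm _
    _ ≤ ‖x‖ * ‖T (T x)‖ := norm_inner_le_norm _ _

theorem monotone_ratio_of_sq_le_mul {a : ℕ → ℝ} (ha : ∀ n, 0 < a n)
    (h : ∀ n, a (n + 1) ^ 2 ≤ a n * a (n + 2)) : Monotone fun n => a (n + 1) / a n := by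
  refine monotone_nat_of_le_succ fun n => ?_
  rw [div_le_div_iff₀ (ha n) (ha (n + 1))]
  linarith [h n]

theorem exists_tendsto_ratio_of_sq_le_mul {a : ℕ → ℝ} {C : ℝ} (ha : ∀ n, 0 < a n)
    (h : ∀ n, a (n + 1) ^ 2 ≤ a n * a (n + 2)) (hC : ∀ n, a (n + 1) ≤ C * a n) :
    ∃ L, 0 < L ∧ Tendsto (fun n => a (n + 1) / a n) atTop (𝓝 L) := by
  have hbdd : BddAbove (Set.range fun n => a (n + 1) / a n) := by
    refine ⟨C, ?_⟩
    rintro _ ⟨n, rfl⟩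
    exact (div_le_iff₀ (ha n)).2 (hC n)
  refine ⟨_, ?_, tendsto_atTop_ciSup (monotone_ratio_of_sq_le_mul ha h) hbdd⟩
  exact (div_pos (ha 1) (ha 0)).trans_le (le_ciSup hbdd 0)

theorem tendsto_rpow_inv_of_tendsto_ratio {a : ℕ → ℝ} {L : ℝ} (ha : ∀ n, 0 < a n) (hL : 0 < L)
    (h : Tendsto (fun n => a (n + 1) / a n) atTop (𝓝 L)) :
    Tendsto (fun n : ℕ => a n ^ (n : ℝ)⁻¹) atTop (𝓝 L) := by
  have hlog_ratio :
      Tendsto (fun n => Real.log (a (n + 1)) - Real.log (a n)) atTop (𝓝 (Real.log L)) :=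
    ((Real.continuousAt_log hL.ne').tendsto.comp h).congr fun n =>
      Real.log_div (ha _).ne' (ha _).ne'
  have hlog : Tendsto (fun n : ℕ => (n : ℝ)⁻¹ * Real.log (a n)) atTop (𝓝 (Real.log L)) := by
    have h0 : Tendsto (fun n : ℕ => (n : ℝ)⁻¹ * Real.log (a 0)) atTop (𝓝 0) := by
      simpa using tendsto_inv_atTop_nhds_zero_nat.mul_const (Real.log (a 0))
    refine (zero_add (Real.log L) ▸ h0.add hlog_ratio.cesaro).congr fun n => ?_
    rw [Finset.sum_range_sub (fun i => Real.log (a i))]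
    ring
  rw [← Real.exp_log hL]
  refine ((Real.continuous_exp.tendsto _).comp hlog).congr fun n => ?_
  rw [Real.rpow_def_of_pos (ha n), mul_comm]
  rfl

theorem IsSelfAdjoint.norm_pow_succ_apply_sq_le {𝕜 E : Type*} [RCLike 𝕜] [NormedAddCommGroup E]
    [InnerProductSpace 𝕜 E] [CompleteSpace E] {T : E →L[𝕜] E} (hT : IsSelfAdjoint T) (x : E)
    (n : ℕ) : ‖(T ^ (n + 1)) x‖ ^ 2 ≤ ‖(T ^ n) x‖ * ‖(T ^ (n + 2)) x‖ := by
  simp only [FunLike.coe_pow_eq_iterate, Function.iterate_succ_apply']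
  exact hT.isSymmetric.norm_apply_sq_le _

/-- For a self-adjoint bounded operator `T` on a real Hilbert space and `f` with `Tⁿ f ≠ 0`
for all `n`, the limits `lim ⟨Tⁿ⁺¹f,Tⁿ⁺¹f⟩/⟨Tⁿf,Tⁿf⟩` and `lim ⟨Tⁿf,Tⁿf⟩^(1/n)` both exist
(as finite real numbers) and are equal. -/
theorem stmt1 {H : Type*} [NormedAddCommGroup H] [InnerProductSpace ℝ H] [CompleteSpace H]
    (T : H →L[ℝ] H) (hT : IsSelfAdjoint T) (f : H) (hf : ∀ n : ℕ, (T ^ n) f ≠ 0) :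
    ∃ L : ℝ,
      Tendsto (fun n : ℕ => ⟪(T ^ (n + 1)) f, (T ^ (n + 1)) f⟫ / ⟪(T ^ n) f, (T ^ n) f⟫)
        atTop (nhds L) ∧
      Tendsto (fun n : ℕ => (⟪(T ^ n) f, (T ^ n) f⟫ : ℝ) ^ ((n : ℝ)⁻¹)) atTop (nhds L) := by
  simp only [real_inner_self_eq_norm_sq]
  set a : ℕ → ℝ := fun n => ‖(T ^ n) f‖ ^ 2 with ha_def
  have ha : ∀ n, 0 < a n := fun n => pow_pos (norm_pos_iff.2 (hf n)) 2
  have hconv : ∀ n, a (n + 1) ^ 2 ≤ a n * a (n + 2) := fun n => by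
    simpa only [ha_def, ← mul_pow, ← pow_mul] using
      pow_le_pow_left₀ (by positivity) (hT.norm_pow_succ_apply_sq_le f n) 2
  have hbound : ∀ n, a (n + 1) ≤ ‖T‖ ^ 2 * a n := fun n => by
    simp only [ha_def, ← mul_pow, FunLike.coe_pow_eq_iterate, Function.iterate_succ_apply']
    exact pow_le_pow_left₀ (norm_nonneg _) (T.le_opNorm _) 2
  obtain ⟨L, hL, hlim⟩ := exists_tendsto_ratio_of_sq_le_mul ha hconv hbound
  exact ⟨L, hlim, tendsto_rpow_inv_of_tendsto_ratio ha hL hlim⟩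
end

section
/- Let d ≥ 2 and let Φ be a symmetric linear GDMS associated to the free group F_d, with contraction-ratio function c_Φ : F_d → (0,1) satisfying c_Φ(gh) = c_Φ(g)c_Φ(h) whenever the reduced word of gh is the concatenation of the reduced words of g and h, and c_Φ(g) = c_Φ(g⁻¹) for all g. Then for every non-trivial normal subgroup N of F_d, the Poincaré series of N at the half-exponent diverges: Σ_{h∈N} c_Φ(h)^{δ(F_d,Φ)/2} = ∞, where δ(F_d,Φ) is the exponent of convergence of the full group. -/
open scoped BigOperators

/-- The weight of a free-group element with respect to symmetric contraction ratios
`r i` on the generators: the product of the ratios over the letters of the reduced word. -/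
noncomputable def cWeight {d : ℕ} (r : Fin d → ℝ) (g : FreeGroup (Fin d)) : ℝ :=
  ((FreeGroup.toWord g).map (fun p => r p.1)).prod

/-- The exponent of convergence of a subgroup `H` with respect to the weight `cWeight r`. -/
noncomputable def expConv {d : ℕ} (r : Fin d → ℝ) (H : Subgroup (FreeGroup (Fin d))) : ℝ :=
  sInf {t : ℝ | 0 ≤ t ∧ Summable (fun h : H => cWeight r (h : FreeGroup (Fin d)) ^ t)}

/-!
Pick `n ≠ 1` in `N`. For every `g` one extra letter `a`, chosen among the `2d ≥ 4` letters so as to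
avoid three possible cancellations, makes `g a n a⁻¹ g⁻¹` reduced as written. Hence
`g ↦ (g a) n (g a)⁻¹` is an injection `F_d → N` with `c(g a n a⁻¹ g⁻¹) = c(a)² c(n) c(g)²`, and
convergence of `∑_N c^{δ/2}` would force convergence of `∑_{F_d} c^δ`.

The latter diverges. The sphere sums `Z_t(k) = ∑_{|g| = k} c(g)^t` are submultiplicative in `k`.
If `δ > 0` and the series converged at `δ`, then `Z_δ(k) < 1` for some `k ≥ 1`, so by continuity
`Z_t(k) < 1` for some `t < δ`; then `Z_t` decays geometrically and the series converges at `t`,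
contradicting the definition of `δ`. If `δ = 0` the series is `∑ 1`.
-/

namespace FreeGroup

variable {α : Type*}

theorem rel_of_ne_inv {x y : α × Bool} (h : y ≠ (x.1, !x.2)) : x.1 = y.1 → x.2 = y.2 := by
  obtain ⟨i, b⟩ := x
  obtain ⟨j, c⟩ := y
  rintro (rfl : i = j)
  cases b <;> cases c <;> simp_all

theorem IsReduced.append_singleton {L : List (α × Bool)} {a : α × Bool} (hL : IsReduced L)
    (ha : ∀ x ∈ L.getLast?, a ≠ (x.1, !x.2)) : IsReduced (L ++ [a]) :=
  List.isChain_append.2 ⟨hL, IsReduced.singleton, fun x hx y hy => by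
    obtain rfl : y = a := by simpa using hy.symm
    exact rel_of_ne_inv (ha x hx)⟩

theorem IsReduced.cons {L : List (α × Bool)} {a : α × Bool} (hL : IsReduced L)
    (ha : ∀ x ∈ L.head?, a ≠ (x.1, !x.2)) : IsReduced (a :: L) :=
  List.isChain_cons.2 ⟨fun x hx h => (rel_of_ne_inv (ha x hx) h.symm).symm, hL⟩

theorem exists_ne_forall_mem [Nontrivial α] (o₁ o₂ o₃ : Option (α × Bool)) :
    ∃ a, (∀ x ∈ o₁, a ≠ x) ∧ (∀ x ∈ o₂, a ≠ x) ∧ ∀ x ∈ o₃, a ≠ x := by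
  classical
  obtain ⟨i, j, hij⟩ := exists_pair_ne α
  let x₀ : α × Bool := (i, true)
  have hcard : ({o₁.getD x₀, o₂.getD x₀, o₃.getD x₀} : Finset (α × Bool)).card <
      ({(i, true), (i, false), (j, true), (j, false)} : Finset (α × Bool)).card := by
    refine Finset.card_le_three.trans_lt ?_
    simp [hij]
  obtain ⟨a, -, ha⟩ := Finset.exists_mem_notMem_of_card_lt_card hcard
  simp only [Finset.mem_insert, Finset.mem_singleton, not_or] at ha
  refine ⟨a, ?_, ?_, ?_⟩ <;> rintro x rfl
  exacts [ha.1, ha.2.1, ha.2.2]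

theorem prod_map_invRev {M : Type*} [CommMonoid M] (f : α → M) (L : List (α × Bool)) :
    ((invRev L).map fun p => f p.1).prod = (L.map fun p => f p.1).prod := by
  simp [invRev, List.map_reverse, List.prod_reverse, Function.comp_def]

variable [DecidableEq α]

theorem IsReduced.invRev {L : List (α × Bool)} (h : IsReduced L) : IsReduced (invRev L) :=
  isReduced_iff_reduce_eq.2 (by rw [reduce_invRev, h.reduce_eq])

theorem toWord_mk_of_isReduced {L : List (α × Bool)} (h : IsReduced L) : (mk L).toWord = L := by
  rw [toWord_mk, h.reduce_eq]

theorem toWord_mul_of_isReduced {x y : FreeGroup α} (h : IsReduced (x.toWord ++ y.toWord)) :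
    (x * y).toWord = x.toWord ++ y.toWord := by
  rw [toWord_mul, h.reduce_eq]

theorem toWord_conj_of_isReduced {x y : FreeGroup α}
    (h : IsReduced (x.toWord ++ y.toWord ++ invRev x.toWord)) :
    (x * y * x⁻¹).toWord = x.toWord ++ y.toWord ++ invRev x.toWord := by
  have hxy := toWord_mul_of_isReduced (x := x) (y := y) (h.infix ⟨[], invRev x.toWord, by simp⟩)
  rw [toWord_mul_of_isReduced (by rwa [hxy, toWord_inv]), hxy, toWord_inv]

theorem exists_toWord_conj [Nontrivial α] (g n : FreeGroup α) (hn : n ≠ 1) :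
    ∃ a : α × Bool, (g * mk [a] * n * (g * mk [a])⁻¹).toWord =
      g.toWord ++ [a] ++ n.toWord ++ invRev (g.toWord ++ [a]) := by
  have hn' : n.toWord ≠ [] := mt toWord_eq_nil_iff.1 hn
  let inv (x : α × Bool) : α × Bool := (x.1, !x.2)
  obtain ⟨a, ha₁, ha₂, ha₃⟩ := exists_ne_forall_mem
    (g.toWord.getLast?.map inv) (n.toWord.head?.map inv) n.toWord.getLast?
  have hga : IsReduced (g.toWord ++ [a]) :=
    isReduced_toWord.append_singleton fun x hx => ha₁ _ (Option.mem_map_of_mem inv hx)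
  have han : IsReduced ([a] ++ n.toWord) :=
    isReduced_toWord.cons fun x hx => ha₂ _ (Option.mem_map_of_mem inv hx)
  have hna : IsReduced (n.toWord ++ [inv a]) := isReduced_toWord.append_singleton fun x hx h =>
    ha₃ x hx (by simp_all [inv, Prod.ext_iff])
  have hag : IsReduced ([inv a] ++ invRev g.toWord) := by
    simpa [invRev_append, invRev] using hga.invRev
  have hx : (g * mk [a]).toWord = g.toWord ++ [a] := by
    have hmk : (mk [a]).toWord = [a] := toWord_mk_of_isReduced IsReduced.singleton
    rw [toWord_mul_of_isReduced (by rwa [hmk]), hmk]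
  have hconj : IsReduced ((g * mk [a]).toWord ++ n.toWord ++ invRev (g * mk [a]).toWord) := by
    simpa [hx, invRev_append, invRev] using
      ((hga.append_overlap han (by simp)).append_overlap hna hn').append_overlap hag (by simp)
  exact ⟨a, by rw [toWord_conj_of_isReduced hconj, hx]⟩

theorem eq_of_toWord_conj_eq {g g' n : FreeGroup α} {a a' : α × Bool}
    (h : g.toWord ++ [a] ++ n.toWord ++ invRev (g.toWord ++ [a]) =
      g'.toWord ++ [a'] ++ n.toWord ++ invRev (g'.toWord ++ [a'])) : g = g' := by
  have hlen : g.toWord.length = g'.toWord.length := by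
    have := congrArg List.length h
    simp only [List.length_append, invRev_length, List.length_singleton] at this
    omega
  have hga := List.append_inj_left' (List.append_inj_left' h (by simp [hlen])) rfl
  exact toWord_injective (List.append_inj_left' hga rfl)

theorem finite_setOf_norm_eq [Finite α] (n : ℕ) : {g : FreeGroup α | g.norm = n}.Finite :=
  (List.finite_length_eq (α × Bool) n).preimage toWord_injective.injOn

noncomputable def sphere [Finite α] (n : ℕ) : Finset (FreeGroup α) :=
  (finite_setOf_norm_eq n).toFinset

theorem mem_sphere [Finite α] {n : ℕ} {g : FreeGroup α} : g ∈ sphere n ↔ g.norm = n :=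
  Set.Finite.mem_toFinset _

theorem toWord_mk_take (g : FreeGroup α) (m : ℕ) :
    (mk (g.toWord.take m)).toWord = g.toWord.take m :=
  toWord_mk_of_isReduced (isReduced_toWord.infix (List.take_prefix m _).isInfix)

theorem toWord_mk_drop (g : FreeGroup α) (m : ℕ) :
    (mk (g.toWord.drop m)).toWord = g.toWord.drop m :=
  toWord_mk_of_isReduced (isReduced_toWord.infix (List.drop_suffix m _).isInfix)

theorem mk_take_mul_mk_drop (g : FreeGroup α) (m : ℕ) :
    mk (g.toWord.take m) * mk (g.toWord.drop m) = g := by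
  rw [mul_mk, List.take_append_drop, mk_toWord]

end FreeGroup

open FreeGroup

theorem summable_of_submultiplicative {a : ℕ → ℝ} (h0 : ∀ n, 0 ≤ a n)
    (hmul : ∀ m n, a (m + n) ≤ a m * a n) {k : ℕ} (hk : k ≠ 0) (hak : a k < 1) : Summable a := by
  have : NeZero k := ⟨hk⟩
  have hpow : ∀ q s, a (q * k + s) ≤ a k ^ q * a s := by
    intro q s
    induction q with
    | zero => simp
    | succ q ih =>
      calc a ((q + 1) * k + s) = a (k + (q * k + s)) := by ring_nf
        _ ≤ a k * (a k ^ q * a s) := (hmul _ _).trans (mul_le_mul_of_nonneg_left ih (h0 k))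
        _ = a k ^ (q + 1) * a s := by ring
  rw [← (Nat.divModEquiv k).symm.summable_iff]
  have hbound : Summable fun p : ℕ × Fin k => a k ^ p.1 * a p.2 :=
    (summable_geometric_of_lt_one (h0 k) hak).mul_of_nonneg
      (Summable.of_finite (f := fun s : Fin k => a s))
      (fun _ => pow_nonneg (h0 k) _) fun s => h0 s
  exact hbound.of_nonneg_of_le (fun _ => h0 _) fun p => hpow p.1 p.2

section PoincareSeries

variable {d : ℕ} {r : Fin d → ℝ}

variable (r) in
theorem cWeight_eq_of_toWord_eq {g : FreeGroup (Fin d)} {L : List (Fin d × Bool)}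
    (h : g.toWord = L) : cWeight r g = (L.map fun p => r p.1).prod := by
  rw [cWeight, h]

theorem cWeight_pos (hr : ∀ i, 0 < r i) (g : FreeGroup (Fin d)) :
    0 < cWeight r g :=
  List.prod_pos (by simp [hr])

variable (r) in
theorem cWeight_eq_of_toWord_eq_conj {g x n : FreeGroup (Fin d)} {a : Fin d × Bool}
    (h : g.toWord = x.toWord ++ [a] ++ n.toWord ++ invRev (x.toWord ++ [a])) :
    cWeight r g = r a.1 ^ 2 * cWeight r n * cWeight r x ^ 2 := by
  rw [cWeight_eq_of_toWord_eq r h]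
  simp only [List.map_append, List.prod_append, prod_map_invRev]
  simp only [cWeight, List.map_cons, List.map_nil, List.prod_singleton]
  ring

variable (r) in
theorem cWeight_eq_mk_take_mul_mk_drop (g : FreeGroup (Fin d)) (m : ℕ) :
    cWeight r g = cWeight r (mk (g.toWord.take m)) * cWeight r (mk (g.toWord.drop m)) := by
  rw [cWeight_eq_of_toWord_eq r (toWord_mk_take g m),
    cWeight_eq_of_toWord_eq r (toWord_mk_drop g m),
    ← List.prod_append, ← List.map_append, List.take_append_drop, cWeight]

theorem summable_rpow_of_summable_normal_rpow_half [Nontrivial (Fin d)] (hr : ∀ i, 0 < r i)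
    (N : Subgroup (FreeGroup (Fin d))) [N.Normal] (hN : N ≠ ⊥) {s : ℝ}
    (hs : 0 ≤ s) (hsum : Summable fun h : N => cWeight r h ^ (s / 2)) :
    Summable fun g : FreeGroup (Fin d) => cWeight r g ^ s := by
  obtain ⟨n, hnN, hn⟩ := N.bot_or_exists_ne_one.resolve_left hN
  choose a ha using fun g => exists_toWord_conj g n hn
  let ψ (g : FreeGroup (Fin d)) : N :=
    ⟨g * mk [a g] * n * (g * mk [a g])⁻¹, Subgroup.Normal.conj_mem ‹_› n hnN _⟩
  have hψ : Function.Injective ψ := fun g g' h =>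
    eq_of_toWord_conj_eq (n := n) (a := a g) (a' := a g') <| by
      rw [← ha g, ← ha g']
      exact congrArg (fun h : N => (h : FreeGroup (Fin d)).toWord) h
  obtain ⟨i₀, hi₀⟩ := Finite.exists_min r
  set K := (r i₀ ^ 2 * cWeight r n) ^ (s / 2)
  have hn₀ := cWeight_pos hr n
  have hi₀' := hr i₀
  have hK : 0 < K := by positivity
  refine ((hsum.comp_injective hψ).mul_left K⁻¹).of_nonneg_of_le
    (fun g => Real.rpow_nonneg (cWeight_pos hr g).le _) fun g => ?_
  have hg := cWeight_pos hr g
  rw [le_inv_mul_iff₀ hK]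
  calc K * cWeight r g ^ s = (r i₀ ^ 2 * cWeight r n * cWeight r g ^ 2) ^ (s / 2) := by
        rw [Real.mul_rpow (by positivity) (by positivity), ← Real.rpow_natCast_mul hg.le]
        congr 2
        push_cast
        ring
    _ ≤ (r (a g).1 ^ 2 * cWeight r n * cWeight r g ^ 2) ^ (s / 2) := by
        gcongr
        exact hi₀ _
    _ = cWeight r (ψ g) ^ (s / 2) := by rw [cWeight_eq_of_toWord_eq_conj r (ha g)]

variable (r) in
noncomputable def sphereSum (t : ℝ) (n : ℕ) : ℝ :=
  ∑ g ∈ sphere n, cWeight r g ^ t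

theorem sphereSum_add_le (hr : ∀ i, 0 < r i) (t : ℝ) (m n : ℕ) :
    sphereSum r t (m + n) ≤ sphereSum r t m * sphereSum r t n := by
  let split (g : FreeGroup (Fin d)) := (mk (g.toWord.take m), mk (g.toWord.drop m))
  let F (p : FreeGroup (Fin d) × FreeGroup (Fin d)) := cWeight r p.1 ^ t * cWeight r p.2 ^ t
  have hsplit : Function.Injective split := fun g g' h => by
    rw [← mk_take_mul_mk_drop g m, ← mk_take_mul_mk_drop g' m]
    exact congrArg (fun p => p.1 * p.2) h
  have hmaps : ∀ g ∈ sphere (m + n), split g ∈ sphere m ×ˢ sphere n := fun g hg => by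
    rw [mem_sphere, FreeGroup.norm] at hg
    simp only [Finset.mem_product, mem_sphere, FreeGroup.norm, split, toWord_mk_take,
      toWord_mk_drop, List.length_take, List.length_drop]
    omega
  calc sphereSum r t (m + n) = ∑ g ∈ sphere (m + n), F (split g) :=
        Finset.sum_congr rfl fun g _ => by
          rw [cWeight_eq_mk_take_mul_mk_drop r g m,
            Real.mul_rpow (cWeight_pos hr _).le (cWeight_pos hr _).le]
    _ = ∑ p ∈ (sphere (m + n)).image split, F p := (Finset.sum_image hsplit.injOn).symm
    _ ≤ ∑ p ∈ sphere m ×ˢ sphere n, F p :=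
        Finset.sum_le_sum_of_subset_of_nonneg (Finset.image_subset_iff.2 hmaps) fun p _ _ =>
          mul_nonneg (Real.rpow_nonneg (cWeight_pos hr _).le _)
            (Real.rpow_nonneg (cWeight_pos hr _).le _)
    _ = sphereSum r t m * sphereSum r t n := by
        rw [Finset.sum_product, sphereSum, sphereSum, Finset.sum_mul_sum]

theorem continuous_sphereSum (hr : ∀ i, 0 < r i) (n : ℕ) :
    Continuous fun t => sphereSum r t n :=
  continuous_finsetSum _ fun g _ => Real.continuous_const_rpow (cWeight_pos hr g).ne'

theorem summable_rpow_iff_summable_sphereSum (hr : ∀ i, 0 < r i) (t : ℝ) :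
    Summable (fun g : FreeGroup (Fin d) => cWeight r g ^ t) ↔ Summable (sphereSum r t) := by
  have hpart (g : FreeGroup (Fin d)) : ∃! n, g ∈ (sphere (α := Fin d) n : Set _) :=
    ⟨g.norm, mem_sphere.2 rfl, fun _ hn => (mem_sphere.1 hn).symm⟩
  rw [summable_partition (fun g => Real.rpow_nonneg (cWeight_pos hr g).le t) hpart]
  have htsum (n : ℕ) := Finset.tsum_subtype' (sphere (α := Fin d) n) fun g => cWeight r g ^ t
  simp only [htsum]
  exact and_iff_right fun _ => Summable.of_finite

variable (r) in
theorem expConv_nonneg (H : Subgroup (FreeGroup (Fin d))) : 0 ≤ expConv r H :=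
  Real.sInf_nonneg fun _ ht => ht.1

theorem expConv_top_le {t : ℝ} (ht : 0 ≤ t)
    (hsum : Summable fun g : FreeGroup (Fin d) => cWeight r g ^ t) : expConv r ⊤ ≤ t :=
  csInf_le ⟨0, fun _ hs => hs.1⟩ ⟨ht, hsum.comp_injective Subtype.val_injective⟩

open Filter Topology in
theorem not_summable_rpow_expConv [Nonempty (Fin d)] (hr : ∀ i, 0 < r i) :
    ¬ Summable fun g : FreeGroup (Fin d) => cWeight r g ^ expConv r ⊤ := by
  intro hδ
  rcases (expConv_nonneg r ⊤).eq_or_lt with h0 | hpos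
  · rw [← h0] at hδ
    simp only [Real.rpow_zero] at hδ
    exact one_ne_zero ((summable_const_iff 1).1 hδ)
  obtain ⟨k, hk, hk0⟩ := (((summable_rpow_iff_summable_sphereSum hr _).1 hδ).tendsto_atTop_zero
    |>.eventually_lt_const one_pos |>.and (eventually_ne_atTop 0)).exists
  have hnear : ∀ᶠ t in 𝓝[<] expConv r ⊤, 0 < t ∧ sphereSum r t k < 1 :=
    nhdsWithin_le_nhds <| (eventually_gt_nhds hpos).and <|
      (continuous_sphereSum hr k).continuousAt.eventually_lt continuousAt_const hk
  obtain ⟨t, ⟨ht0, htk⟩, htδ⟩ := (hnear.and self_mem_nhdsWithin).exists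
  have := expConv_top_le ht0.le <| (summable_rpow_iff_summable_sphereSum hr t).2 <|
    summable_of_submultiplicative (fun n => Finset.sum_nonneg fun g _ =>
      Real.rpow_nonneg (cWeight_pos hr g).le t) (sphereSum_add_le hr t) hk0 htk
  exact lt_irrefl _ (this.trans_lt htδ)

end PoincareSeries

/-- For a symmetric linear GDMS associated to `F_d` (`d ≥ 2`) with contraction ratios
`r i ∈ (0,1)` and for every non-trivial normal subgroup `N` of `F_d`, the Poincaré series of
`N` diverges at the half-exponent `δ(F_d, Φ)/2`. -/
theorem stmt6 {d : ℕ} (hd : 2 ≤ d) (r : Fin d → ℝ) (hr : ∀ i, 0 < r i ∧ r i < 1)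
    (N : Subgroup (FreeGroup (Fin d))) [N.Normal] (hN : N ≠ ⊥) :
    ¬ Summable (fun h : N =>
        cWeight r (h : FreeGroup (Fin d)) ^ (expConv r (⊤ : Subgroup (FreeGroup (Fin d))) / 2)) := by
  have : Nontrivial (Fin d) := Fin.nontrivial_iff_two_le.2 hd
  have hr₀ : ∀ i, 0 < r i := fun i => (hr i).1
  exact fun hsum => not_summable_rpow_expConv hr₀ <|
    summable_rpow_of_summable_normal_rpow_half hr₀ N hN (expConv_nonneg r ⊤) hsum
end

section
/- Let d ≥ 2 and N a non-trivial normal subgroup of the free group F_d = ⟨g₁,…,g_d⟩. Let V = {g₁^{±1},…,g_d^{±1}}. Then there exists a finite set F of reduced words representing elements of N ∪ {id}, such that for all i, j ∈ V there exists τ ∈ F ∪ {∅} with the property that the concatenation i τ j is again a reduced word (no cancellation at the junctions). -/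
/-!
Pick `n ≠ 1` in `N` with reduced word `w`. Conjugating `w` by a letter `c` keeps it reduced and in
`N` as long as `c` cancels neither end of `w`; the new word begins with `c` and ends with `c⁻¹`.
Conjugating twice, first to control the ends of `w` and then to match the prescribed neighbours
`i` and `j`, gives a word that fits between `i` and `j`. Each choice of `c` must avoid at most three
letters, and there are at least four since the rank is at least two.
-/

namespace FreeGroup

variable {α : Type*}

def invLetter (x : α × Bool) : α × Bool := (x.1, !x.2)

@[simp]
theorem invLetter_invLetter (x : α × Bool) : invLetter (invLetter x) = x := by
  simp [invLetter]

theorem invLetter_injective : Function.Injective (invLetter : α × Bool → α × Bool) :=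
  Function.LeftInverse.injective invLetter_invLetter

theorem ne_invLetter_comm {a b : α × Bool} : a ≠ invLetter b ↔ b ≠ invLetter a := by
  rw [ne_eq, ne_eq, ← invLetter_injective.eq_iff, invLetter_invLetter, eq_comm]

theorem adjacent_of_ne_invLetter {a b : α × Bool} (h : b ≠ invLetter a) :
    a.1 = b.1 → a.2 = b.2 := by
  obtain ⟨a, s⟩ := a
  obtain ⟨b, t⟩ := b
  rintro (rfl : a = b)
  cases s <;> cases t <;> simp_all [invLetter]

theorem isReduced_cons_append_singleton {x y f l : α × Bool} {w : List (α × Bool)}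
    (hw : IsReduced w) (hf : w.head? = some f) (hl : w.getLast? = some l)
    (hxf : f ≠ invLetter x) (hly : y ≠ invLetter l) : IsReduced (x :: (w ++ [y])) := by
  refine List.isChain_cons.mpr ⟨?_, List.isChain_append.mpr ⟨hw, List.isChain_singleton y, ?_⟩⟩
  · rw [List.head?_append, hf]
    rintro _ ⟨⟩
    exact adjacent_of_ne_invLetter hxf
  · rw [hl]
    rintro _ ⟨⟩ _ ⟨⟩
    exact adjacent_of_ne_invLetter hly

theorem mk_conj_letter (c : α × Bool) (w : List (α × Bool)) :
    mk (c :: (w ++ [invLetter c])) = mk [c] * mk w * (mk [c])⁻¹ := by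
  rw [inv_mk, mul_mk, mul_mk]
  simp [invRev, invLetter]

theorem exists_letter_avoiding [Nontrivial α] (p q r : α × Bool) :
    ∃ c, c ≠ p ∧ c ≠ q ∧ c ≠ r := by
  classical
  obtain ⟨a, b, hab⟩ := exists_pair_ne α
  have hcard : ({(a, true), (a, false), (b, true), (b, false)} : Finset (α × Bool)).card = 4 := by
    simp [hab]
  obtain ⟨c, -, hc⟩ := Finset.exists_mem_notMem_of_card_lt_card
    (s := {p, q, r}) (Finset.card_le_three.trans_lt (by rw [hcard]; norm_num))
  simp only [Finset.mem_insert, Finset.mem_singleton, not_or] at hc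
  exact ⟨c, hc⟩

theorem IsReduced.conj_letter {w : List (α × Bool)} {f l c : α × Bool} (hw : IsReduced w)
    (hf : w.head? = some f) (hl : w.getLast? = some l) (hcf : c ≠ invLetter f) (hcl : c ≠ l) :
    IsReduced (c :: (w ++ [invLetter c])) :=
  isReduced_cons_append_singleton hw hf hl (ne_invLetter_comm.mp hcf)
    (invLetter_injective.ne hcl)

theorem mk_conj_letter_mem {N : Subgroup (FreeGroup α)} [N.Normal] {w : List (α × Bool)}
    (hw : mk w ∈ N) (c : α × Bool) : mk (c :: (w ++ [invLetter c])) ∈ N := by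
  rw [mk_conj_letter]
  exact Subgroup.Normal.conj_mem ‹_› _ hw _

theorem exists_mk_mem_isReduced_between [Nontrivial α] (N : Subgroup (FreeGroup α)) [N.Normal]
    (hN : N ≠ ⊥) (i j : α × Bool) : ∃ τ, mk τ ∈ N ∧ IsReduced (i :: (τ ++ [j])) := by
  classical
  obtain ⟨n, hnN, hn1⟩ := N.bot_or_exists_ne_one.resolve_left hN
  have hne : n.toWord ≠ [] := by simpa [toWord_eq_nil_iff] using hn1
  obtain ⟨f, hf⟩ := Option.ne_none_iff_exists'.mp (List.head?_eq_none_iff.not.mpr hne)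
  obtain ⟨l, hl⟩ := Option.ne_none_iff_exists'.mp (List.getLast?_eq_none_iff.not.mpr hne)
  obtain ⟨c, hcf, hcl, -⟩ := exists_letter_avoiding (invLetter f) l l
  set w := c :: (n.toWord ++ [invLetter c])
  have hw : IsReduced w := isReduced_toWord.conj_letter hf hl hcf hcl
  have hwN : mk w ∈ N := mk_conj_letter_mem (by rwa [mk_toWord]) c
  obtain ⟨d, hdc, hdi, hdj⟩ := exists_letter_avoiding (invLetter c) (invLetter i) j
  refine ⟨d :: (w ++ [invLetter d]), mk_conj_letter_mem hwN d, ?_⟩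
  have hw' : IsReduced (d :: (w ++ [invLetter d])) :=
    hw.conj_letter rfl (List.getLast?_concat (l := c :: n.toWord)) hdc hdc
  exact isReduced_cons_append_singleton hw' rfl (List.getLast?_concat (l := d :: w))
    hdi (by simpa using hdj.symm)

end FreeGroup

/-- For `d ≥ 2` and a non-trivial normal subgroup `N` of the free group `F_d`, there is a finite
set `F` of reduced words representing elements of `N ∪ {id}` such that any two letters `i, j`
can be connected: there is `τ ∈ F ∪ {∅}` with `i τ j` reduced (no cancellation). -/
theorem stmt15 {d : ℕ} (hd : 2 ≤ d)
    (N : Subgroup (FreeGroup (Fin d))) [N.Normal] (hN : N ≠ ⊥) :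
    ∃ F : Finset (List (Fin d × Bool)),
      (∀ w ∈ F, FreeGroup.reduce w = w ∧ FreeGroup.mk w ∈ N) ∧
      (∀ i j : Fin d × Bool, ∃ τ : List (Fin d × Bool), (τ ∈ F ∨ τ = []) ∧
        FreeGroup.reduce (i :: (τ ++ [j])) = i :: (τ ++ [j])) := by
  have : Nontrivial (Fin d) := Fin.nontrivial_iff_two_le.mpr hd
  choose τ hτN hτ using FreeGroup.exists_mk_mem_isReduced_between N hN
  refine ⟨Finset.univ.image fun p : (Fin d × Bool) × (Fin d × Bool) ↦ τ p.1 p.2, ?_, fun i j ↦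
    ⟨τ i j, Or.inl (Finset.mem_image_of_mem _ (Finset.mem_univ (i, j))), (hτ i j).reduce_eq⟩⟩
  rintro _ hw
  obtain ⟨⟨i, j⟩, -, rfl⟩ := Finset.mem_image.mp hw
  exact ⟨((hτ i j).infix ⟨[i], [j], by simp⟩).reduce_eq, hτN i j⟩
end

section
/- Let Σ be a Markov shift over a finite alphabet I, G a countable group, and Ψ : I* → G a semigroup homomorphism with Ψ(Σ*) = G, satisfying: for all a, b ∈ I there is γ ∈ Ψ⁻¹{id} ∩ Σ* ∪ {∅} with aγb ∈ Σ*. Then the pressure P(φ, Ψ⁻¹{g} ∩ Σ*) is independent of g ∈ G, for any bounded function φ : Σ → ℝ that is measurable with respect to finitely many coordinates, where P(φ, C) := limsup_n (1/n) log Σ_{ω ∈ C, |ω| = n} exp(S_ω φ) (suitably interpreted over windows of lengths near n). -/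
/-!
Appending to each word of the fibre of `g` a connecting word of product `1` and then a fixed
admissible word `T` of product `g⁻¹ g'` maps that fibre injectively into the fibres of `g'`. The
words get longer by at most `D` letters and, since `φ` depends on finitely many coordinates,
`S_ω φ` drops by at most a constant. Grouping the words by their last letter gives
`Z_g(n) ≤ C · Z_{g'}(m)` for some `m ∈ [n, n + D]`, hence `P(g) ≤ P(g')`.

The convention `log 0 = 0` makes empty fibres a special case. If the fibres of `g'` are eventually
nonempty then so are those of `g`. Fix a letter `o` and look at the words that can follow `o` and
return to it. Modulo the gcd `d` of the lengths of those with product `1`, the length of such a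
word is determined by its product, and every large length in that residue class occurs. A word of
the fibre of `g'` glued to a return word and to a second copy of itself then reaches every
residue class modulo `d`.
-/

open Filter

/-- The subshift of finite type over alphabet `I` with transition relation `A`. -/
def SFT {I : Type*} (A : I → I → Prop) : Type _ := {ω : ℕ → I // ∀ n, A (ω n) (ω (n + 1))}

/-- The left shift on the subshift. -/
def SFT.shift {I : Type*} {A : I → I → Prop} (ω : SFT A) : SFT A :=
  ⟨fun n => ω.1 (n + 1), fun n => ω.2 (n + 1)⟩

/-- The cylinder set determined by a finite word. -/
def cylinder {I : Type*} (A : I → I → Prop) (l : List I) : Set (SFT A) :=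
  {ω | ∀ i, ∀ h : i < l.length, ω.1 i = l.get ⟨i, h⟩}

/-- The `n`-th Birkhoff (ergodic) sum of `φ` under the shift. -/
noncomputable def birkhoff {I : Type*} {A : I → I → Prop} (φ : SFT A → ℝ) (n : ℕ)
    (ω : SFT A) : ℝ :=
  ∑ i ∈ Finset.range n, φ (SFT.shift^[i] ω)

/-- `S_ω φ`: the supremum of the Birkhoff sum over the cylinder of the word `l`. -/
noncomputable def Sword {I : Type*} (A : I → I → Prop) (φ : SFT A → ℝ) (l : List I) : ℝ :=
  sSup ((fun τ => birkhoff φ l.length τ) '' cylinder A l)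

/-- The weighted count over the admissible words of length `n` lying in the fibre
`Ψ⁻¹{g}` of the semigroup homomorphism induced by the letter map `Ψ`. -/
noncomputable def cosetSum {I : Type*} (A : I → I → Prop) {G : Type*} [Group G]
    (Ψ : I → G) (φ : SFT A → ℝ) (g : G) (n : ℕ) : ℝ :=
  ∑' l : {l : List I // l.length = n ∧ l.Chain' A ∧ (l.map Ψ).prod = g},
    Real.exp (Sword A φ (l : List I))

/-- The pressure of `φ` on the fibre `Ψ⁻¹{g} ∩ Σ*`. -/
noncomputable def cosetPressure {I : Type*} (A : I → I → Prop) {G : Type*} [Group G]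
    (Ψ : I → G) (φ : SFT A → ℝ) (g : G) : ℝ :=
  limsup (fun n : ℕ => (n : ℝ)⁻¹ * Real.log (cosetSum A Ψ φ g n)) atTop

theorem Nat.eventually_mem_of_modEq_shifts {S : Set ℕ} {d N e K c₀ : ℕ} (hd : 0 < d)
    (hS : ∀ n ≥ N, ∃ c ≤ n + e, c ≡ c₀ [MOD d] ∧ ∀ m ≥ K, d ∣ m → n + c + m ∈ S) :
    ∀ᶠ M in atTop, M ∈ S := by
  filter_upwards [eventually_ge_atTop (2 * (N + d) + e + c₀ + K)] with M hM
  have hr : (M - c₀ - N) % d < d := Nat.mod_lt _ hd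
  obtain ⟨c, hce, hc, hmem⟩ := hS (N + (M - c₀ - N) % d) (Nat.le_add_right _ _)
  have hmod : N + (M - c₀ - N) % d + c ≡ M [MOD d] := calc
    _ ≡ N + (M - c₀ - N) % d + c₀ [MOD d] := hc.add_left _
    _ ≡ N + (M - c₀ - N) + c₀ [MOD d] := ((Nat.mod_modEq _ _).add_left N).add_right c₀
    _ = M := by omega
  convert hmem _ (by omega) ((Nat.modEq_iff_dvd' (by omega)).mp hmod) using 1
  omega

theorem inv_mul_le_inv_mul_add {x y K B : ℝ} {n m D : ℕ} (hn : 0 < n) (hnm : n ≤ m)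
    (hmD : m ≤ n + D) (hB : 0 ≤ B) (hy : (m : ℝ)⁻¹ * y ≤ B) (hxy : x ≤ K + y) :
    (n : ℝ)⁻¹ * x ≤ (m : ℝ)⁻¹ * y + (K + D * B) / n := by
  have hn' : (0 : ℝ) < n := by exact_mod_cast hn
  have hm' : (0 : ℝ) < m := by exact_mod_cast hn.trans_le hnm
  have hmn : (0 : ℝ) ≤ m - n := sub_nonneg.mpr (by exact_mod_cast hnm)
  have hmnD : (m : ℝ) - n ≤ D := by
    have : (m : ℝ) ≤ n + D := by exact_mod_cast hmD
    linarith
  have hyt : y = m * ((m : ℝ)⁻¹ * y) := by field_simp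
  have htail : ((m : ℝ) - n) * ((m : ℝ)⁻¹ * y) ≤ D * B :=
    (mul_le_mul_of_nonneg_left hy hmn).trans (mul_le_mul_of_nonneg_right hmnD hB)
  rw [inv_mul_le_iff₀ hn', mul_add, mul_div_cancel₀ _ hn'.ne']
  nlinarith

theorem Filter.limsup_le_limsup_of_le_shifted {u v : ℕ → ℝ} {c C : ℝ}
    (hc : c ≤ limsup v atTop) (hu : IsCoboundedUnder (· ≤ ·) atTop u)
    (hv : IsBoundedUnder (· ≤ ·) atTop v)
    (h : ∀ᶠ n in atTop, u n ≤ c ∨ ∃ m ≥ n, u n ≤ v m + C / n) :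
    limsup u atTop ≤ limsup v atTop := by
  refine le_of_forall_pos_le_add fun ε hε => limsup_le_of_le hu ?_
  obtain ⟨N, hN⟩ := eventually_atTop.mp
    (eventually_lt_of_limsup_lt (lt_add_of_pos_right _ (half_pos hε)) hv)
  have hC : ∀ᶠ n : ℕ in atTop, C / n < ε / 2 :=
    (tendsto_const_div_atTop_nhds_zero_nat C).eventually (gt_mem_nhds (half_pos hε))
  filter_upwards [h, hC, eventually_ge_atTop N] with n hn hCn hNn
  rcases hn with hn | ⟨m, hm, hum⟩
  · linarith
  · linarith [hN m (hNn.trans hm)]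

open List

section Bridges

variable {I : Type*} {G : Type*} [Group G] {A : I → I → Prop} {Ψ : I → G}

def IsNeutralBridge (A : I → I → Prop) (Ψ : I → G) (γ : I → I → List I) : Prop :=
  ∀ a b, ((γ a b).map Ψ).prod = 1 ∧ (a :: (γ a b ++ [b])).IsChain A

variable {γ : I → I → List I}

theorem List.IsChain.append_bridge (hγ : IsNeutralBridge A Ψ γ) {l r : List I} {a b : I}
    (hl : l.IsChain A) (hr : r.IsChain A) (ha : l.getLast? = some a) (hb : r.head? = some b) :
    (l ++ γ a b ++ r).IsChain A := by
  obtain ⟨l, rfl⟩ := getLast?_eq_some_iff.mp ha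
  obtain ⟨r, rfl⟩ := head?_eq_some_iff.mp hb
  have hbridge : ([a] ++ (γ a b ++ [b])).IsChain A := (hγ a b).2
  have h : (l ++ [a] ++ γ a b ++ [b]).IsChain A := by
    simpa using hl.append_overlap hbridge (cons_ne_nil a [])
  simpa using h.append_overlap (l₃ := r) (by simpa using hr) (cons_ne_nil b [])

theorem prod_map_append_bridge (hγ : IsNeutralBridge A Ψ γ) (l r : List I) (a b : I) :
    ((l ++ γ a b ++ r).map Ψ).prod = (l.map Ψ).prod * (r.map Ψ).prod := by
  simp [(hγ a b).1]

theorem exists_forall_length_le [Finite I] (γ : I → I → List I) :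
    ∃ B, ∀ a b, (γ a b).length ≤ B := by
  cases nonempty_fintype I
  exact ⟨Finset.univ.sup fun p : I × I => (γ p.1 p.2).length,
    fun a b => Finset.le_sup (f := fun p : I × I => (γ p.1 p.2).length) (Finset.mem_univ (a, b))⟩

end Bridges

section ReturnWords

variable {I : Type*} {G : Type*} [Group G] {A : I → I → Prop} {Ψ : I → G} {o : I}

/-- The empty word counts, so that the lengths of return words of product `1` form a monoid. -/
def IsReturnWord (A : I → I → Prop) (o : I) (w : List I) : Prop :=
  (o :: w).IsChain A ∧ w.getLast?.getD o = o

theorem IsReturnWord.isChain_cons_append {w s : List I} (hw : IsReturnWord A o w)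
    (hs : (o :: s).IsChain A) : (o :: (w ++ s)).IsChain A := by
  rw [← cons_append]
  refine hw.1.append (isChain_cons.mp hs).2 ?_
  rw [getLast?_cons, hw.2]
  rintro x ⟨⟩
  exact (isChain_cons.mp hs).1

theorem IsReturnWord.append {w w' : List I} (hw : IsReturnWord A o w)
    (hw' : IsReturnWord A o w') : IsReturnWord A o (w ++ w') := by
  refine ⟨hw.isChain_cons_append hw'.1, ?_⟩
  rcases eq_or_ne w' [] with rfl | hne
  · simpa using hw.2
  · rw [getLast?_append_of_ne_nil _ hne]
    exact hw'.2

theorem IsReturnWord.of_bridge (hγ : IsNeutralBridge A Ψ γ) {w : List I} {a b : I}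
    (hw : w.IsChain A) (hb : w.head? = some b) (ha : w.getLast? = some a) :
    IsReturnWord A o (γ o b ++ w ++ γ a o ++ [o]) := by
  have h₁ : ([o] ++ γ o b ++ w).IsChain A := (isChain_singleton o).append_bridge hγ hw rfl hb
  have hne : w ≠ [] := by rintro rfl; simp at hb
  have h₂ := h₁.append_bridge hγ (isChain_singleton o)
    (by rw [getLast?_append_of_ne_nil _ hne, ha]) rfl
  exact ⟨by simpa using h₂, by simp⟩

variable (A Ψ o) in
def HasReturnWord (h : G) (n : ℕ) : Prop :=
  ∃ w, IsReturnWord A o w ∧ (w.map Ψ).prod = h ∧ w.length = n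

theorem HasReturnWord.add {h h' : G} {n n' : ℕ} (hn : HasReturnWord A Ψ o h n)
    (hn' : HasReturnWord A Ψ o h' n') : HasReturnWord A Ψ o (h * h') (n + n') := by
  obtain ⟨w, hw, rfl, rfl⟩ := hn
  obtain ⟨w', hw', rfl, rfl⟩ := hn'
  exact ⟨w ++ w', hw.append hw', by simp, by simp⟩

variable (A Ψ o) in
def loopLengths : AddSubmonoid ℕ where
  carrier := {n | HasReturnWord A Ψ o 1 n}
  zero_mem' := ⟨[], ⟨isChain_singleton o, rfl⟩, rfl, rfl⟩
  add_mem' hn hn' := by simpa using hn.add hn'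

@[simp]
theorem mem_loopLengths {n : ℕ} : n ∈ loopLengths A Ψ o ↔ HasReturnWord A Ψ o 1 n :=
  Iff.rfl

end ReturnWords

section Residues

variable {I : Type*} {G : Type*} [Group G] {A : I → I → Prop} {Ψ : I → G} {o : I}
  {γ : I → I → List I}

theorem hasReturnWord_bridge (hγ : IsNeutralBridge A Ψ γ) :
    HasReturnWord A Ψ o (Ψ o) ((γ o o).length + 1) :=
  ⟨γ o o ++ [o], ⟨by simpa using (hγ o o).2, by simp⟩, by simp [(hγ o o).1], by simp⟩

theorem exists_hasReturnWord (hγ : IsNeutralBridge A Ψ γ)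
    (hsurj : ∀ g : G, ∃ l : List I, l.IsChain A ∧ (l.map Ψ).prod = g) (h : G) :
    ∃ n, HasReturnWord A Ψ o h n := by
  obtain ⟨l, hl, hprod⟩ := hsurj (h * (Ψ o)⁻¹)
  rcases eq_or_ne l [] with rfl | hne
  · obtain rfl : h = Ψ o := by simpa [eq_comm, mul_inv_eq_one] using hprod
    exact ⟨_, hasReturnWord_bridge hγ⟩
  · refine ⟨_, _, IsReturnWord.of_bridge hγ hl (head?_eq_some_head hne)
      (getLast?_eq_some_getLast hne), ?_, rfl⟩
    simp [(hγ _ _).1, hprod]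

theorem setGcd_loopLengths_pos (hγ : IsNeutralBridge A Ψ γ)
    (hsurj : ∀ g : G, ∃ l : List I, l.IsChain A ∧ (l.map Ψ).prod = g) :
    0 < Nat.setGcd (loopLengths A Ψ o) := by
  obtain ⟨r, hr⟩ := exists_hasReturnWord (o := o) hγ hsurj (Ψ o)⁻¹
  have hmem : (γ o o).length + 1 + r ∈ loopLengths A Ψ o := by
    simpa using (hasReturnWord_bridge hγ).add hr
  refine Nat.pos_of_ne_zero fun h0 => ?_
  simpa using Nat.setGcd_eq_zero_iff.mp h0 hmem

theorem HasReturnWord.modEq (hγ : IsNeutralBridge A Ψ γ)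
    (hsurj : ∀ g : G, ∃ l : List I, l.IsChain A ∧ (l.map Ψ).prod = g) {h : G} {n n' : ℕ}
    (hn : HasReturnWord A Ψ o h n) (hn' : HasReturnWord A Ψ o h n') :
    n ≡ n' [MOD Nat.setGcd (loopLengths A Ψ o)] := by
  obtain ⟨r, hr⟩ := exists_hasReturnWord (o := o) hγ hsurj h⁻¹
  have h₁ : n + r ∈ loopLengths A Ψ o := by simpa using hn.add hr
  have h₂ : n' + r ∈ loopLengths A Ψ o := by simpa using hn'.add hr
  exact Nat.ModEq.add_right_cancel' r <|
    (Nat.modEq_zero_iff_dvd.mpr (Nat.setGcd_dvd_of_mem h₁)).trans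
      (Nat.modEq_zero_iff_dvd.mpr (Nat.setGcd_dvd_of_mem h₂)).symm

theorem exists_hasReturnWord_of_dvd :
    ∃ K, ∀ m ≥ K, Nat.setGcd (loopLengths A Ψ o) ∣ m → HasReturnWord A Ψ o 1 m := by
  obtain ⟨K, hK⟩ := Nat.exists_mem_closure_of_ge (loopLengths A Ψ o)
  exact ⟨K, fun m hm hdvd => by simpa using hK m hm hdvd⟩

end Residues

section Fibres

variable {I : Type*} {G : Type*} [Group G] {A : I → I → Prop} {Ψ : I → G} {o : I}
  {γ : I → I → List I}

variable (A Ψ) in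
def fibreWords (g : G) (n : ℕ) : Set (List I) :=
  {l | l.length = n ∧ l.IsChain A ∧ (l.map Ψ).prod = g}

/-- The witnesses are `w ++ γ a o ++ [o] ++ L ++ γ o b ++ w`: one copy of `w` is closed up into a
return word of length `c`, the other one is free. -/
theorem exists_hasReturnWord_fibreWords_nonempty (hγ : IsNeutralBridge A Ψ γ) {B : ℕ}
    (hB : ∀ a b, (γ a b).length ≤ B) {h : G} {n : ℕ} (hn : 1 ≤ n)
    (hne : (fibreWords A Ψ h n).Nonempty) :
    ∃ c ≤ n + (2 * B + 1), HasReturnWord A Ψ o (h * Ψ o) c ∧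
      ∀ x ℓ, HasReturnWord A Ψ o x ℓ →
        (fibreWords A Ψ (h * Ψ o * x * h) (n + c + ℓ)).Nonempty := by
  obtain ⟨w, rfl, hw, rfl⟩ := hne
  have hw0 : w ≠ [] := by rintro rfl; simp at hn
  set b := w.head hw0
  set a := w.getLast hw0
  refine ⟨(γ o b ++ w ++ γ a o ++ [o]).length, ?_, ⟨_,
    IsReturnWord.of_bridge hγ hw (head?_eq_some_head hw0) (getLast?_eq_some_getLast hw0),
    by simp [(hγ _ _).1], rfl⟩, ?_⟩
  · simp only [length_append, length_singleton]
    linarith [hB o b, hB a o]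
  rintro x ℓ ⟨L, hL, rfl, rfl⟩
  have hleft : (w ++ γ a o ++ [o]).IsChain A :=
    hw.append_bridge hγ (isChain_singleton o) (getLast?_eq_some_getLast hw0) rfl
  have hright : ([o] ++ (L ++ (γ o b ++ w))).IsChain A :=
    hL.isChain_cons_append (by simpa using
      (isChain_singleton o).append_bridge hγ hw rfl (head?_eq_some_head hw0))
  refine ⟨w ++ γ a o ++ [o] ++ (L ++ (γ o b ++ w)), ?_,
    hleft.append_overlap hright (cons_ne_nil o []), ?_⟩
  · simp only [length_append, length_singleton]
    ring
  · simp [(hγ _ _).1, mul_assoc]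

end Fibres

section Transfer

variable {I : Type*} {G : Type*} [Group G] {A : I → I → Prop} {Ψ : I → G}
  {γ : I → I → List I}

theorem eventually_fibreWords_nonempty [Nonempty I] [Finite I] (hγ : IsNeutralBridge A Ψ γ)
    (hsurj : ∀ g : G, ∃ l : List I, l.IsChain A ∧ (l.map Ψ).prod = g) {g g' : G}
    (h : ∀ᶠ n in atTop, (fibreWords A Ψ g' n).Nonempty) :
    ∀ᶠ n in atTop, (fibreWords A Ψ g n).Nonempty := by
  obtain ⟨o⟩ := ‹Nonempty I›
  obtain ⟨B, hB⟩ := exists_forall_length_le γ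
  obtain ⟨K, hK⟩ := exists_hasReturnWord_of_dvd (A := A) (Ψ := Ψ) (o := o)
  obtain ⟨ℓ₀, hℓ₀⟩ := exists_hasReturnWord (o := o) hγ hsurj ((Ψ o)⁻¹ * g'⁻¹ * g * g'⁻¹)
  obtain ⟨c₀, hc₀⟩ := exists_hasReturnWord (o := o) hγ hsurj (g * g'⁻¹)
  obtain ⟨N, hN⟩ := eventually_atTop.mp h
  refine Nat.eventually_mem_of_modEq_shifts (S := {n | (fibreWords A Ψ g n).Nonempty})
    (setGcd_loopLengths_pos (o := o) hγ hsurj) (N := max N 1) (e := 2 * B + 1 + ℓ₀) (K := K)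
    (c₀ := c₀) fun n hn => ?_
  obtain ⟨c, hc, hret, hfib⟩ := exists_hasReturnWord_fibreWords_nonempty (o := o) hγ hB
    (le_of_max_le_right hn) (hN n (le_of_max_le_left hn))
  have hprod : g' * Ψ o * ((Ψ o)⁻¹ * g'⁻¹ * g * g'⁻¹) = g * g'⁻¹ := by group
  have hprod' : g' * Ψ o * ((Ψ o)⁻¹ * g'⁻¹ * g * g'⁻¹) * g' = g := by group
  have hcℓ : HasReturnWord A Ψ o (g * g'⁻¹) (c + ℓ₀) := hprod ▸ hret.add hℓ₀
  refine ⟨c + ℓ₀, by omega, hcℓ.modEq hγ hsurj hc₀, fun m hm hdvd => ?_⟩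
  have hfib' := hfib _ (ℓ₀ + m) (by simpa using hℓ₀.add (hK m hm hdvd))
  rw [hprod'] at hfib'
  show (fibreWords A Ψ g _).Nonempty
  simpa only [add_assoc] using hfib'

end Transfer

section Birkhoff

variable {I : Type*} {A : I → I → Prop} {φ : SFT A → ℝ} {M : ℝ} {k : ℕ}

variable (A) in
def DependsOnFirst (φ : SFT A → ℝ) (k : ℕ) : Prop :=
  ∀ ω τ : SFT A, (∀ i < k, ω.1 i = τ.1 i) → φ ω = φ τ

theorem SFT.shift_iterate_apply (i : ℕ) (ω : SFT A) (j : ℕ) :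
    (SFT.shift^[i] ω).1 j = ω.1 (i + j) := by
  induction i generalizing ω with
  | zero => simp
  | succ i ih =>
    rw [Function.iterate_succ_apply, ih]
    exact congrArg ω.1 (by omega)

theorem birkhoff_add (φ : SFT A → ℝ) (m n : ℕ) (ω : SFT A) :
    birkhoff φ (m + n) ω = birkhoff φ m ω + birkhoff φ n (SFT.shift^[m] ω) := by
  simp only [birkhoff, Finset.sum_range_add, ← Function.iterate_add_apply, add_comm]

theorem abs_birkhoff_le (hM : ∀ ω, |φ ω| ≤ M) (n : ℕ) (ω : SFT A) :
    |birkhoff φ n ω| ≤ n * M :=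
  (Finset.abs_sum_le_sum_abs _ _).trans <| by
    simpa using Finset.sum_le_card_nsmul (Finset.range n) _ M fun i _ => hM _

theorem birkhoff_eq_of_forall_eq (hk : DependsOnFirst A φ k) {n : ℕ} {ω τ : SFT A}
    (h : ∀ i < n, ∀ j < k, ω.1 (i + j) = τ.1 (i + j)) : birkhoff φ n ω = birkhoff φ n τ :=
  Finset.sum_congr rfl fun i hi => hk _ _ fun j hj => by
    simpa [SFT.shift_iterate_apply] using h i (Finset.mem_range.mp hi) j hj

/-- Only the last `k` terms of the Birkhoff sum look beyond the first `n` coordinates. -/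
theorem birkhoff_le_of_forall_eq (hk : DependsOnFirst A φ k) (hM : ∀ ω, |φ ω| ≤ M) {n : ℕ}
    {ω τ : SFT A} (h : ∀ i < n, ω.1 i = τ.1 i) :
    birkhoff φ n ω ≤ birkhoff φ n τ + 2 * k * M := by
  have hn : n = (n - k) + (n - (n - k)) := by omega
  set q := n - (n - k)
  have hhead : birkhoff φ (n - k) ω = birkhoff φ (n - k) τ :=
    birkhoff_eq_of_forall_eq hk fun i hi j hj => h _ (by omega)
  have hq' : (q : ℝ) * M ≤ k * M :=
    mul_le_mul_of_nonneg_right (by exact_mod_cast (by omega : q ≤ k)) ((abs_nonneg _).trans (hM ω))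
  rw [hn, birkhoff_add, birkhoff_add, hhead]
  linarith [abs_le.mp (abs_birkhoff_le hM q (SFT.shift^[n - k] ω)),
    abs_le.mp (abs_birkhoff_le hM q (SFT.shift^[n - k] τ))]

end Birkhoff

section Sword

variable {I : Type*} {A : I → I → Prop} {φ : SFT A → ℝ} {M : ℝ} {k : ℕ}

theorem cylinder_nonempty [Nonempty I] (hext : ∀ i, ∃ j, A i j) {l : List I}
    (hl : l.IsChain A) : (cylinder A l).Nonempty := by
  classical
  choose next hnext using hext
  set a := l.getLast?.getD (Classical.arbitrary I)
  refine ⟨⟨fun n => if h : n < l.length then l[n] else next^[n + 1 - l.length] a, fun n => ?_⟩,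
    fun i hi => by simp [hi]⟩
  by_cases h₁ : n + 1 < l.length
  · simpa [h₁, Nat.lt_of_succ_lt h₁] using List.isChain_iff_getElem.mp hl n h₁
  by_cases h₀ : n < l.length
  · have hlast : l[n] = a := by
      simp [a, List.getLast?_eq_getElem?, show l.length - 1 = n by omega, h₀]
    simpa [h₀, h₁, hlast, show n + 1 + 1 - l.length = 1 by omega] using hnext a
  · simpa [h₀, h₁, show n + 1 + 1 - l.length = (n + 1 - l.length) + 1 by omega,
      Function.iterate_succ_apply'] using hnext _

theorem cylinder_append_subset (l r : List I) : cylinder A (l ++ r) ⊆ cylinder A l :=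
  fun ω hω i hi => by simpa [List.getElem_append_left hi] using hω i (by simp; omega)

theorem bddAbove_birkhoff_image (hM : ∀ ω, |φ ω| ≤ M) (n : ℕ) (s : Set (SFT A)) :
    BddAbove ((fun τ => birkhoff φ n τ) '' s) :=
  ⟨n * M, by rintro _ ⟨ω, -, rfl⟩; exact (abs_le.mp (abs_birkhoff_le hM n ω)).2⟩

theorem Sword_le (hM : ∀ ω, |φ ω| ≤ M) (hM0 : 0 ≤ M) (l : List I) :
    Sword A φ l ≤ l.length * M :=
  Real.sSup_le (by rintro _ ⟨ω, -, rfl⟩; exact (abs_le.mp (abs_birkhoff_le hM _ ω)).2)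
    (by positivity)

theorem birkhoff_le_Sword (hM : ∀ ω, |φ ω| ≤ M) {l : List I} {ω : SFT A}
    (hω : ω ∈ cylinder A l) : birkhoff φ l.length ω ≤ Sword A φ l :=
  le_csSup (bddAbove_birkhoff_image hM _ _) ⟨ω, hω, rfl⟩

theorem neg_le_Sword [Nonempty I] (hext : ∀ i, ∃ j, A i j) (hM : ∀ ω, |φ ω| ≤ M) {l : List I}
    (hl : l.IsChain A) : -(l.length * M) ≤ Sword A φ l := by
  obtain ⟨ω, hω⟩ := cylinder_nonempty hext hl
  exact (abs_le.mp (abs_birkhoff_le hM _ ω)).1.trans (birkhoff_le_Sword hM hω)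

theorem Sword_le_Sword_append [Nonempty I] (hext : ∀ i, ∃ j, A i j) (hM : ∀ ω, |φ ω| ≤ M)
    (hk : DependsOnFirst A φ k) {l r : List I} (h : (l ++ r).IsChain A) :
    Sword A φ l ≤ Sword A φ (l ++ r) + (2 * k + r.length) * M := by
  obtain ⟨τ, hτ⟩ := cylinder_nonempty hext h
  have hτl := cylinder_append_subset l r hτ
  have hsplit := birkhoff_add φ l.length r.length τ
  have htail := (abs_le.mp (abs_birkhoff_le hM r.length (SFT.shift^[l.length] τ))).1
  have hfull : birkhoff φ (l.length + r.length) τ ≤ Sword A φ (l ++ r) := by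
    simpa using birkhoff_le_Sword hM hτ
  refine csSup_le ((cylinder_nonempty hext h.left_of_append).image _) ?_
  rintro _ ⟨ω, hω, rfl⟩
  have := birkhoff_le_of_forall_eq (n := l.length) hk hM (ω := ω) (τ := τ)
    fun i hi => (hω i hi).trans (hτl i hi).symm
  linarith

end Sword

section CosetSum

variable {I : Type*} {G : Type*} [Group G] {A : I → I → Prop} {Ψ : I → G} {φ : SFT A → ℝ}
  {M : ℝ} {k : ℕ} {γ : I → I → List I} {g : G} {n : ℕ}

theorem cosetSum_eq_tsum (g : G) (n : ℕ) :
    cosetSum A Ψ φ g n = ∑' l : fibreWords A Ψ g n, Real.exp (Sword A φ l) :=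
  rfl

theorem finite_fibreWords [Finite I] (g : G) (n : ℕ) : (fibreWords A Ψ g n).Finite :=
  (List.finite_length_eq I n).subset fun _ hl => hl.1

instance [Finite I] (g : G) (n : ℕ) : Finite (fibreWords A Ψ g n) :=
  (finite_fibreWords g n).to_subtype

theorem cosetSum_eq_zero (h : ¬(fibreWords A Ψ g n).Nonempty) : cosetSum A Ψ φ g n = 0 := by
  rw [Set.not_nonempty_iff_eq_empty] at h
  rw [cosetSum_eq_tsum, h, tsum_empty]

theorem exp_Sword_le_cosetSum [Finite I] {l : List I} (hl : l ∈ fibreWords A Ψ g n) :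
    Real.exp (Sword A φ l) ≤ cosetSum A Ψ φ g n := by
  rw [cosetSum_eq_tsum]
  exact Summable.le_tsum (f := fun l : fibreWords A Ψ g n => Real.exp (Sword A φ l)) .of_finite
    ⟨l, hl⟩ fun _ _ => (Real.exp_pos _).le

theorem cosetSum_pos [Finite I] (h : (fibreWords A Ψ g n).Nonempty) : 0 < cosetSum A Ψ φ g n :=
  (Real.exp_pos _).trans_le (exp_Sword_le_cosetSum h.some_mem)

theorem cosetSum_le_card_pow_mul_exp [Fintype I] (hM : ∀ ω, |φ ω| ≤ M) (hM0 : 0 ≤ M) (g : G)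
    (n : ℕ) :
    cosetSum A Ψ φ g n ≤ Fintype.card I ^ n * Real.exp (n * M) := by
  have hinj : Function.Injective
      (fun l => ⟨l.1, l.2.1⟩ : fibreWords A Ψ g n → List.Vector I n) :=
    fun l l' h => Subtype.ext (congrArg (fun v : List.Vector I n => v.1) h)
  rw [cosetSum_eq_tsum]
  calc ∑' l : fibreWords A Ψ g n, Real.exp (Sword A φ l)
        ≤ ∑' _ : fibreWords A Ψ g n, Real.exp (n * M) :=
        Summable.tsum_le_tsum
          (fun l => Real.exp_le_exp.mpr (by simpa only [l.2.1] using Sword_le hM hM0 l.1))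
          .of_finite .of_finite
    _ ≤ ∑' _ : List.Vector I n, Real.exp (n * M) :=
        tsum_comp_le_tsum_of_inj (f := fun _ : List.Vector I n => Real.exp (n * M)) .of_finite
          (fun _ => (Real.exp_pos _).le) hinj
    _ = Fintype.card I ^ n * Real.exp (n * M) := by
        rw [tsum_fintype, Finset.sum_const, Finset.card_univ, card_vector, nsmul_eq_mul]
        push_cast
        ring

theorem append_bridge_mem_fibreWords (hγ : IsNeutralBridge A Ψ γ) {l T : List I}
    (hl : l ∈ fibreWords A Ψ g n) (hl0 : l ≠ []) (hT : T.IsChain A) (hT0 : T ≠ []) :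
    l ++ γ (l.getLast hl0) (T.head hT0) ++ T ∈
      fibreWords A Ψ (g * (T.map Ψ).prod) (n + (γ (l.getLast hl0) (T.head hT0) ++ T).length) :=
  ⟨by simp [hl.1],
    hl.2.1.append_bridge hγ hT (getLast?_eq_some_getLast hl0) (head?_eq_some_head hT0),
    by rw [prod_map_append_bridge hγ, hl.2.2]⟩

theorem cosetSum_le_exp_mul_sum [Fintype I] [Nonempty I] (hext : ∀ i, ∃ j, A i j)
    (hM : ∀ ω, |φ ω| ≤ M) (hM0 : 0 ≤ M) (hk : DependsOnFirst A φ k)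
    (hγ : IsNeutralBridge A Ψ γ) {T : List I} (hT : T.IsChain A) (hT0 : T ≠ []) {D : ℕ}
    (hD : ∀ a, (γ a (T.head hT0)).length + T.length ≤ D) (hn : 1 ≤ n) :
    cosetSum A Ψ φ g n ≤ Real.exp ((2 * k + D) * M) *
      ∑ a, cosetSum A Ψ φ (g * (T.map Ψ).prod) (n + (γ a (T.head hT0) ++ T).length) := by
  have hne : ∀ l : fibreWords A Ψ g n, l.1 ≠ [] := fun l h => by
    have := l.2.1
    simp [h] at this
    omega
  let F : (Σ a, fibreWords A Ψ (g * (T.map Ψ).prod) (n + (γ a (T.head hT0) ++ T).length)) → ℝ :=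
    fun x => Real.exp (Sword A φ x.2)
  let J : fibreWords A Ψ g n →
      Σ a, fibreWords A Ψ (g * (T.map Ψ).prod) (n + (γ a (T.head hT0) ++ T).length) :=
    fun l => ⟨_, _, append_bridge_mem_fibreWords hγ l.2 (hne l) hT hT0⟩
  have hJ : Function.Injective J := fun l l' h => Subtype.ext <| List.append_inj_left
    (by simpa [J] using congrArg (fun x => (x.2 : List I)) h) (by rw [l.2.1, l'.2.1])
  have hpt : ∀ l : fibreWords A Ψ g n,
      Real.exp (Sword A φ l) ≤ Real.exp ((2 * k + D) * M) * F (J l) := by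
    intro l
    rw [← Real.exp_add, Real.exp_le_exp]
    have hchain := (J l).2.2.2.1
    simp only [J, List.append_assoc] at hchain
    have happ := Sword_le_Sword_append hext hM hk hchain
    have hlen : ((γ (l.1.getLast (hne l)) (T.head hT0) ++ T).length : ℝ) ≤ D := by
      exact_mod_cast (by simpa using hD _)
    simp only [J, List.append_assoc]
    nlinarith
  calc cosetSum A Ψ φ g n = ∑' l : fibreWords A Ψ g n, Real.exp (Sword A φ l) := rfl
    _ ≤ ∑' l, Real.exp ((2 * k + D) * M) * F (J l) :=
        Summable.tsum_le_tsum hpt .of_finite .of_finite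
    _ = Real.exp ((2 * k + D) * M) * ∑' l, F (J l) := tsum_mul_left
    _ ≤ Real.exp ((2 * k + D) * M) * ∑' x, F x := by
        gcongr
        exact tsum_comp_le_tsum_of_inj (f := F) .of_finite (fun _ => (Real.exp_pos _).le) hJ
    _ = _ := by
        rw [Summable.tsum_sigma' (fun _ => .of_finite) .of_finite, tsum_fintype]
        rfl

end CosetSum

section Growth

variable {I : Type*} {G : Type*} [Group G] {A : I → I → Prop} {Ψ : I → G} {φ : SFT A → ℝ}
  {M : ℝ} {k : ℕ} {γ : I → I → List I} {g : G} {n : ℕ}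

theorem exists_log_cosetSum_le [Fintype I] [Nonempty I] (hext : ∀ i, ∃ j, A i j)
    (hM : ∀ ω, |φ ω| ≤ M) (hM0 : 0 ≤ M) (hk : DependsOnFirst A φ k)
    (hγ : IsNeutralBridge A Ψ γ) {T : List I} (hT : T.IsChain A) (hT0 : T ≠ []) {D : ℕ}
    (hD : ∀ a, (γ a (T.head hT0)).length + T.length ≤ D) (hn : 1 ≤ n)
    (hne : (fibreWords A Ψ g n).Nonempty) :
    ∃ m, n ≤ m ∧ m ≤ n + D ∧ Real.log (cosetSum A Ψ φ g n) ≤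
      Real.log (Fintype.card I) + (2 * k + D) * M +
        Real.log (cosetSum A Ψ φ (g * (T.map Ψ).prod) m) := by
  set S := fun a => cosetSum A Ψ φ (g * (T.map Ψ).prod) (n + (γ a (T.head hT0) ++ T).length)
  obtain ⟨a, -, ha⟩ := Finset.exists_max_image Finset.univ S Finset.univ_nonempty
  have hle : cosetSum A Ψ φ g n ≤ Fintype.card I * Real.exp ((2 * k + D) * M) * S a :=
    calc cosetSum A Ψ φ g n ≤ Real.exp ((2 * k + D) * M) * ∑ b, S b :=
          cosetSum_le_exp_mul_sum hext hM hM0 hk hγ hT hT0 hD hn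
      _ ≤ Real.exp ((2 * k + D) * M) * (Finset.univ.card • S a) := by
          gcongr
          exact Finset.sum_le_card_nsmul _ _ _ fun b _ => ha b (Finset.mem_univ b)
      _ = Fintype.card I * Real.exp ((2 * k + D) * M) * S a := by
          rw [nsmul_eq_mul, Finset.card_univ]
          ring
  have hpos := cosetSum_pos (φ := φ) hne
  have hSa : 0 < S a := pos_of_mul_pos_right (hpos.trans_le hle) (by positivity)
  refine ⟨n + (γ a (T.head hT0) ++ T).length, by omega, by simpa using hD a, ?_⟩
  calc Real.log (cosetSum A Ψ φ g n)
      ≤ Real.log (Fintype.card I * Real.exp ((2 * k + D) * M) * S a) := Real.log_le_log hpos hle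
    _ = _ := by
        have hcard : (Fintype.card I : ℝ) ≠ 0 := by positivity
        rw [Real.log_mul (by positivity) hSa.ne', Real.log_mul hcard (Real.exp_ne_zero _),
          Real.log_exp]

theorem inv_mul_log_cosetSum_le [Fintype I] [Nonempty I] (hM : ∀ ω, |φ ω| ≤ M) (hM0 : 0 ≤ M)
    (g : G) (n : ℕ) :
    (n : ℝ)⁻¹ * Real.log (cosetSum A Ψ φ g n) ≤ Real.log (Fintype.card I) + M := by
  have hC : 0 ≤ Real.log (Fintype.card I) + M :=
    add_nonneg (Real.log_nonneg (by exact_mod_cast Fintype.card_pos)) hM0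
  by_cases hne : (fibreWords A Ψ g n).Nonempty
  · rcases Nat.eq_zero_or_pos n with rfl | hn
    · simpa using hC
    have hlog := Real.log_le_log (cosetSum_pos hne) (cosetSum_le_card_pow_mul_exp hM hM0 g n)
    rw [Real.log_mul (by positivity) (Real.exp_ne_zero _), Real.log_pow, Real.log_exp] at hlog
    rw [inv_mul_le_iff₀ (by positivity)]
    linarith
  · simpa [cosetSum_eq_zero hne] using hC

theorem neg_le_inv_mul_log_cosetSum [Finite I] [Nonempty I] (hext : ∀ i, ∃ j, A i j)
    (hM : ∀ ω, |φ ω| ≤ M) (hM0 : 0 ≤ M) (g : G) (n : ℕ) :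
    -M ≤ (n : ℝ)⁻¹ * Real.log (cosetSum A Ψ φ g n) := by
  by_cases hne : (fibreWords A Ψ g n).Nonempty
  · rcases Nat.eq_zero_or_pos n with rfl | hn
    · simpa using hM0
    obtain ⟨l, hl⟩ := hne
    have hexp : Real.exp (-(n * M)) ≤ cosetSum A Ψ φ g n := by
      refine le_trans ?_ (exp_Sword_le_cosetSum hl)
      simpa [hl.1] using neg_le_Sword hext hM hl.2.1
    have hlog := (Real.le_log_iff_exp_le (cosetSum_pos ⟨l, hl⟩)).mpr hexp
    rw [le_inv_mul_iff₀ (by positivity)]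
    linarith
  · simpa [cosetSum_eq_zero hne] using hM0

end Growth

section Pressure

variable {I : Type*} {G : Type*} [Group G] {A : I → I → Prop} {Ψ : I → G} {φ : SFT A → ℝ}
  {M : ℝ} {k : ℕ} {γ : I → I → List I}

theorem cosetPressure_le_of_ne [Fintype I] [Nonempty I] (hext : ∀ i, ∃ j, A i j)
    (hsurj : ∀ g : G, ∃ l : List I, l.IsChain A ∧ (l.map Ψ).prod = g)
    (hγ : IsNeutralBridge A Ψ γ) (hM : ∀ ω, |φ ω| ≤ M) (hM0 : 0 ≤ M)
    (hk : DependsOnFirst A φ k) {g g' : G} (hne : g ≠ g') :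
    cosetPressure A Ψ φ g ≤ cosetPressure A Ψ φ g' := by
  obtain ⟨T, hT, hTprod⟩ := hsurj (g⁻¹ * g')
  have hT0 : T ≠ [] := by
    rintro rfl
    exact hne (inv_mul_eq_one.mp (by simpa using hTprod.symm))
  obtain ⟨B, hB⟩ := exists_forall_length_le γ
  set D := B + T.length
  set C := Real.log (Fintype.card I) + M
  set u := fun n : ℕ => (n : ℝ)⁻¹ * Real.log (cosetSum A Ψ φ g n)
  set v := fun n : ℕ => (n : ℝ)⁻¹ * Real.log (cosetSum A Ψ φ g' n)
  obtain ⟨K, key⟩ : ∃ K : ℝ, ∀ n ≥ 1, (fibreWords A Ψ g n).Nonempty → ∃ m ≥ n,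
      u n ≤ v m + K / n := by
    refine ⟨Real.log (Fintype.card I) + (2 * k + D) * M + D * C, fun n hn hfib => ?_⟩
    obtain ⟨m, hnm, hmD, hlog⟩ := exists_log_cosetSum_le hext hM hM0 hk hγ hT hT0
      (fun a => Nat.add_le_add_right (hB a _) _) hn hfib
    rw [hTprod, mul_inv_cancel_left] at hlog
    have hC : 0 ≤ C := add_nonneg (Real.log_nonneg (by exact_mod_cast Fintype.card_pos)) hM0
    exact ⟨m, hnm, inv_mul_le_inv_mul_add hn hnm hmD hC (inv_mul_log_cosetSum_le hM hM0 g' m) hlog⟩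
  have hu : IsCoboundedUnder (· ≤ ·) atTop u :=
    isCoboundedUnder_le_of_le atTop fun n => neg_le_inv_mul_log_cosetSum hext hM hM0 g n
  have hv : IsBoundedUnder (· ≤ ·) atTop v :=
    isBoundedUnder_of ⟨C, inv_mul_log_cosetSum_le hM hM0 g'⟩
  -- Empty fibres give `u n = log 0 = 0`, which is only harmless when `0 ≤ limsup v`.
  by_cases hev : ∀ᶠ n in atTop, (fibreWords A Ψ g n).Nonempty
  · refine limsup_le_limsup_of_le_shifted (C := K) le_rfl hu hv ?_
    filter_upwards [hev, eventually_ge_atTop 1] with n hn h1 using Or.inr (key n h1 hn)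
  · have hfreq : ∃ᶠ n in atTop, ¬(fibreWords A Ψ g' n).Nonempty :=
      not_eventually.mp (mt (eventually_fibreWords_nonempty hγ hsurj) hev)
    have h0 : 0 ≤ limsup v atTop :=
      le_limsup_of_frequently_le (hfreq.mono fun n hn => by simp [v, cosetSum_eq_zero hn]) hv
    refine limsup_le_limsup_of_le_shifted (C := K) h0 hu hv ?_
    filter_upwards [eventually_ge_atTop 1] with n h1
    by_cases hn : (fibreWords A Ψ g n).Nonempty
    · exact Or.inr (key n h1 hn)
    · exact Or.inl (by simp [cosetSum_eq_zero hn])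

end Pressure

theorem stmt16_general {I : Type*} [Fintype I] (A : I → I → Prop)
    {G : Type*} [Group G] (Ψ : I → G)
    (hext : ∀ i : I, ∃ j : I, A i j)
    (hsurj : ∀ g : G, ∃ l : List I, l.Chain' A ∧ (l.map Ψ).prod = g)
    (hconn : ∀ a b : I, ∃ γ : List I, (γ.map Ψ).prod = 1 ∧ List.Chain' A (a :: (γ ++ [b])))
    (φ : SFT A → ℝ) (hbdd : ∃ M : ℝ, ∀ ω : SFT A, |φ ω| ≤ M)
    (hfin : ∃ k : ℕ, ∀ ω τ : SFT A, (∀ i < k, ω.1 i = τ.1 i) → φ ω = φ τ) :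
    ∀ g g' : G, cosetPressure A Ψ φ g = cosetPressure A Ψ φ g' := by
  intro g g'
  rcases isEmpty_or_nonempty I with hI | hI
  · have htriv : ∀ h : G, h = 1 := fun h => by
      obtain ⟨_ | ⟨a, _⟩, -, rfl⟩ := hsurj h
      · rfl
      · exact isEmptyElim a
    rw [htriv g, htriv g']
  choose γ hγ using hconn
  obtain ⟨M, hM⟩ := hbdd
  obtain ⟨k, hk⟩ := hfin
  have hM' : ∀ ω, |φ ω| ≤ max M 0 := fun ω => (hM ω).trans (le_max_left _ _)
  rcases eq_or_ne g g' with rfl | hne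
  · rfl
  exact le_antisymm
    (cosetPressure_le_of_ne hext hsurj hγ hM' (le_max_right _ _) hk hne)
    (cosetPressure_le_of_ne hext hsurj hγ hM' (le_max_right _ _) hk hne.symm)

/-- For a Markov shift over a finite alphabet, a countable group `G`, a semigroup homomorphism
`Ψ` with `Ψ(Σ*) = G` and the connectability property, and a bounded potential `φ` depending on
finitely many coordinates, the pressure `P(φ, Ψ⁻¹{g} ∩ Σ*)` does not depend on `g ∈ G`. -/
theorem stmt16 {I : Type*} [Fintype I] (A : I → I → Prop)
    {G : Type*} [Group G] [Countable G] (Ψ : I → G)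
    (hext : ∀ i : I, ∃ j : I, A i j)
    (hsurj : ∀ g : G, ∃ l : List I, l.Chain' A ∧ (l.map Ψ).prod = g)
    (hconn : ∀ a b : I, ∃ γ : List I, (γ.map Ψ).prod = 1 ∧ List.Chain' A (a :: (γ ++ [b])))
    (φ : SFT A → ℝ) (hbdd : ∃ M : ℝ, ∀ ω : SFT A, |φ ω| ≤ M)
    (hfin : ∃ k : ℕ, ∀ ω τ : SFT A, (∀ i < k, ω.1 i = τ.1 i) → φ ω = φ τ) :
    ∀ g g' : G, cosetPressure A Ψ φ g = cosetPressure A Ψ φ g' :=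
  stmt16_general A Ψ hext hsurj hconn φ hbdd hfin
end
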